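/- arXiv:2006.14172 — 2 statements merged into one kernel-verified Lean document; each statement's English description precedes it below -/
import Mathlib

section
/- Let α, c ∈ ℝ, let V : ℝ → ℝ, and let φ : ℝ → ℝ² be differentiable. Define u : ℝ × ℝ → ℝ² by u(t,x) = R(t)·φ(x − ct). Then for every (t,x) ∈ ℝ², the Lagrangian density of the nonlinear wave equation evaluated at u satisfies ½(⟨∂u/∂t(t,x), ∂u/∂t(t,x)⟩ − ⟨∂u/∂x(t,x), ∂u/∂x(t,x)⟩) + ½V(⟨u(t,x),u(t,x)⟩) = L⁰(φ(ξ), φ'(ξ)) with ξ = x − ct. In particular, restricting the action S(u) = ∫(½(⟨u_t,u_t⟩ − ⟨u_x,u_x⟩) + ½V(⟨u,u⟩)) dt dx to rotating travelling waves yields the symmetrised Lagrangian L⁰. -/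
noncomputable section

open RealInnerProductSpace

/-- The Euclidean plane. -/
abbrev E2 : Type := EuclideanSpace ℝ (Fin 2)

/-- The linear map `J(x₁,x₂) = (x₂, −x₁)`. -/
def Jmap (v : E2) : E2 := !₂[v 1, -v 0]

/-- The rotation `R(t) = exp(tαJ)`. -/
def Rot (α t : ℝ) (v : E2) : E2 :=
  !₂[Real.cos (α * t) * v 0 + Real.sin (α * t) * v 1,
    -Real.sin (α * t) * v 0 + Real.cos (α * t) * v 1]

/-- The symmetrised first-order Lagrangian `L⁰`. -/
def L0 (α c : ℝ) (V : ℝ → ℝ) (a v : E2) : ℝ :=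
  (1 / 2) * (α ^ 2 * ⟪a, a⟫ - 2 * α * c * ⟪Jmap a, v⟫ + (c ^ 2 - 1) * ⟪v, v⟫ + V ⟪a, a⟫)

/-- The Hamiltonian `ℋ` obtained as the Legendre transform of `L⁰`. -/
def Ham (α c : ℝ) (V : ℝ → ℝ) (q p : E2) : ℝ :=
  (1 / (2 * (c ^ 2 - 1))) *
    (‖p‖ ^ 2 + 2 * c * α * ⟪p, Jmap q⟫ + α ^ 2 * ‖q‖ ^ 2 - (c ^ 2 - 1) * V (‖q‖ ^ 2))

/-! Since `R(t) = cos(αt) + sin(αt) J` with `J² = -1`, the product rule gives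
`∂ₜu = R(t)(α J φ(ξ) - c φ'(ξ))` and `∂ₓu = R(t) φ'(ξ)`. Both `R(t)` and `J` are isometries, so
expanding `⟪α J φ - c φ', α J φ - c φ'⟫ - ⟪φ', φ'⟫` yields `L⁰(φ, φ')`. -/

theorem Jmap_Jmap (v : E2) : Jmap (Jmap v) = -v := by
  ext i; fin_cases i <;> simp [Jmap]

namespace Jmap

theorem map_add (v w : E2) : Jmap (v + w) = Jmap v + Jmap w := by
  ext i; fin_cases i <;> simp [Jmap]; ring

theorem map_smul (a : ℝ) (v : E2) : Jmap (a • v) = a • Jmap v := by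
  ext i; fin_cases i <;> simp [Jmap]

theorem inner_map_map (v w : E2) : ⟪Jmap v, Jmap w⟫ = ⟪v, w⟫ := by
  simp only [Jmap, PiLp.inner_apply, RCLike.inner_apply, conj_trivial, Fin.sum_univ_two,
    Matrix.cons_val_zero, Matrix.cons_val_one]
  ring

def toCLM : E2 →L[ℝ] E2 :=
  LinearMap.toContinuousLinearMap { toFun := Jmap, map_add' := map_add, map_smul' := map_smul }

theorem hasDerivAt_comp {w : ℝ → E2} {w' : E2} {t : ℝ} (hw : HasDerivAt w w' t) :
    HasDerivAt (fun s => Jmap (w s)) (Jmap w') t :=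
  toCLM.hasFDerivAt.comp_hasDerivAt t hw

end Jmap

namespace Rot

theorem eq_cos_smul_add_sin_smul (α t : ℝ) (v : E2) :
    Rot α t v = Real.cos (α * t) • v + Real.sin (α * t) • Jmap v := by
  ext i; fin_cases i <;> simp [Rot, Jmap]; ring

theorem inner_map_map (α t : ℝ) (v w : E2) : ⟪Rot α t v, Rot α t w⟫ = ⟪v, w⟫ := by
  simp only [Rot, PiLp.inner_apply, RCLike.inner_apply, conj_trivial, Fin.sum_univ_two,
    Matrix.cons_val_zero, Matrix.cons_val_one]
  linear_combination (v 0 * w 0 + v 1 * w 1) * Real.sin_sq_add_cos_sq (α * t)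

variable {α t : ℝ} {w : ℝ → E2} {w' : E2}

theorem hasDerivAt_apply (hw : HasDerivAt w w' t) (s : ℝ) :
    HasDerivAt (fun y => Rot α s (w y)) (Rot α s w') t := by
  simp only [eq_cos_smul_add_sin_smul]
  exact (hw.const_smul (Real.cos (α * s))).add
    ((Jmap.hasDerivAt_comp hw).const_smul (Real.sin (α * s)))

theorem hasDerivAt_comp (hw : HasDerivAt w w' t) :
    HasDerivAt (fun s => Rot α s (w s)) (Rot α t (α • Jmap (w t) + w')) t := by
  have hθ : HasDerivAt (fun s => α * s) α t := by simpa using (hasDerivAt_id t).const_mul α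
  have hcos : HasDerivAt (fun s => Real.cos (α * s)) (-Real.sin (α * t) * α) t :=
    (Real.hasDerivAt_cos (α * t)).comp t hθ
  have hsin : HasDerivAt (fun s => Real.sin (α * s)) (Real.cos (α * t) * α) t :=
    (Real.hasDerivAt_sin (α * t)).comp t hθ
  simp only [eq_cos_smul_add_sin_smul]
  refine ((hcos.smul hw).add (hsin.smul (Jmap.hasDerivAt_comp hw))).congr_deriv ?_
  simp only [Jmap.map_add, Jmap.map_smul, Jmap_Jmap, smul_add, smul_neg, smul_smul]
  module

end Rot

/-- for `u(t,x) = R(t)·φ(x − ct)`, the Lagrangian density of the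
nonlinear wave equation evaluated at `u` equals `L⁰(φ(ξ), φ'(ξ))` with `ξ = x − ct`. -/
theorem statement2 (α c : ℝ) (V : ℝ → ℝ)
    (φ : ℝ → E2) (hφ : Differentiable ℝ φ)
    (u : ℝ → ℝ → E2) (hu : ∀ t x : ℝ, u t x = Rot α t (φ (x - c * t))) :
    ∀ t x : ℝ,
      (1 / 2) * (⟪deriv (fun s => u s x) t, deriv (fun s => u s x) t⟫
          - ⟪deriv (fun y => u t y) x, deriv (fun y => u t y) x⟫)
        + (1 / 2) * V ⟪u t x, u t x⟫
      = L0 α c V (φ (x - c * t)) (deriv φ (x - c * t)) := by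
  intro t x
  set ξ := x - c * t
  have hφξ := (hφ ξ).hasDerivAt
  have hu_t : deriv (fun s => u s x) t = Rot α t (α • Jmap (φ ξ) + (-c) • deriv φ ξ) := by
    have hξ : HasDerivAt (fun s => x - c * s) (-c) t := by
      simpa using ((hasDerivAt_id t).const_mul c).const_sub x
    simp only [hu]
    exact (Rot.hasDerivAt_comp (hφξ.scomp t hξ)).deriv
  have hu_x : deriv (fun y => u t y) x = Rot α t (deriv φ ξ) := by
    have hξ : HasDerivAt (fun y => φ (y - c * t)) (deriv φ ξ) x := by
      simpa using hφξ.comp_sub_const x (c * t)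
    simp only [hu]
    exact (Rot.hasDerivAt_apply hξ t).deriv
  rw [hu_t, hu_x, hu, Rot.inner_map_map, Rot.inner_map_map, Rot.inner_map_map, L0]
  simp only [inner_add_left, inner_add_right, real_inner_smul_left, real_inner_smul_right,
    Jmap.inner_map_map, real_inner_comm (Jmap (φ ξ))]
  ring
end
end

section
/- Let α, c ∈ ℝ with c² ≠ 1, let V : ℝ → ℝ be continuously differentiable, and let q, p : ℝ → ℝ² be differentiable curves satisfying Hamilton's equations for ℋ, namely q'(ξ) = (p(ξ) + cα·Jq(ξ))/(c² − 1) and p'(ξ) = −(α²·q(ξ) − cα·Jp(ξ))/(c² − 1) + V'(‖q(ξ)‖²)·q(ξ) for all ξ ∈ ℝ. Then the rotation invariant I_rot(q,p) = ⟨Jp, q⟩ is conserved: the function ξ ↦ ⟨Jp(ξ), q(ξ)⟩ is constant on ℝ. -/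
noncomputable section

open RealInnerProductSpace

/-! Along the flow, `⟪J p, q⟫' = ⟪J p, q'⟫ + ⟪J p', q⟫`, and only the skew-adjointness of `J`
is needed to see that this vanishes: it kills `⟪J p, p⟫` and `⟪J q, q⟫` (so the `α²` and
potential terms, multiples of `q`, drop out), and it makes the two `cα`-terms `⟪J p, J q⟫` and
`⟪J (J p), q⟫` cancel. -/

section SkewAdjoint

variable {E : Type*} [NormedAddCommGroup E] [InnerProductSpace ℝ E] {J : E →L[ℝ] E}

theorem inner_apply_self_eq_zero_of_skew (hJ : ∀ u v, ⟪J u, v⟫ = -⟪u, J v⟫) (v : E) :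
    ⟪J v, v⟫ = 0 := by
  have h := hJ v v
  rw [← real_inner_comm v (J v)] at h
  linarith

theorem inner_apply_hamiltonian_field_eq_zero (hJ : ∀ u v, ⟪J u, v⟫ = -⟪u, J v⟫)
    (p q : E) (k a b s : ℝ) :
    ⟪J p, k • (p + a • J q)⟫ + ⟪J (-(k • (b • q - a • J p)) + s • q), q⟫ = 0 := by
  simp only [map_add, map_neg, map_smul, map_sub, inner_add_left, inner_neg_left,
    inner_smul_left, inner_sub_left, inner_add_right, inner_smul_right, RCLike.conj_to_real]
  rw [hJ (J p) q, inner_apply_self_eq_zero_of_skew hJ p, inner_apply_self_eq_zero_of_skew hJ q]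
  ring

theorem inner_apply_eq_of_hamiltonian (hJ : ∀ u v, ⟪J u, v⟫ = -⟪u, J v⟫)
    {p q : ℝ → E} (k a b : ℝ) (s : ℝ → ℝ) (hp : Differentiable ℝ p) (hq : Differentiable ℝ q)
    (hq' : ∀ ξ, deriv q ξ = k • (p ξ + a • J (q ξ)))
    (hp' : ∀ ξ, deriv p ξ = -(k • (b • q ξ - a • J (p ξ))) + s ξ • q ξ) (ξ₁ ξ₂ : ℝ) :
    ⟪J (p ξ₁), q ξ₁⟫ = ⟪J (p ξ₂), q ξ₂⟫ := by
  have hderiv : ∀ ξ, HasDerivAt (fun ξ => ⟪J (p ξ), q ξ⟫) 0 ξ := fun ξ => by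
    have h := (J.hasFDerivAt.comp_hasDerivAt ξ (hp ξ).hasDerivAt).inner ℝ (hq ξ).hasDerivAt
    simp only [Function.comp_apply] at h
    rwa [hp', hq', inner_apply_hamiltonian_field_eq_zero hJ] at h
  exact is_const_of_deriv_eq_zero (fun ξ => (hderiv ξ).differentiableAt)
    (fun ξ => (hderiv ξ).deriv) ξ₁ ξ₂

end SkewAdjoint

def Jclm : E2 →L[ℝ] E2 :=
  LinearMap.toContinuousLinearMap
    { toFun := Jmap
      map_add' := fun u v => by ext i; fin_cases i <;> simp [Jmap]; ring
      map_smul' := fun a v => by ext i; fin_cases i <;> simp [Jmap] }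

theorem inner_Jclm_left (u v : E2) : ⟪Jclm u, v⟫ = -⟪u, Jclm v⟫ := by
  simp [Jclm, Jmap, PiLp.inner_apply, Fin.sum_univ_two]

theorem statement15_general (α c : ℝ) (V : ℝ → ℝ)
    (q p : ℝ → E2) (hq : Differentiable ℝ q) (hp : Differentiable ℝ p)
    (hHam : ∀ ξ : ℝ,
      deriv q ξ = (c ^ 2 - 1)⁻¹ • (p ξ + (c * α) • Jmap (q ξ))
        ∧ deriv p ξ = -((c ^ 2 - 1)⁻¹ • ((α ^ 2) • q ξ - (c * α) • Jmap (p ξ)))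
            + deriv V (‖q ξ‖ ^ 2) • q ξ) :
    ∀ ξ₁ ξ₂ : ℝ, ⟪Jmap (p ξ₁), q ξ₁⟫ = ⟪Jmap (p ξ₂), q ξ₂⟫ :=
  inner_apply_eq_of_hamiltonian (J := Jclm) inner_Jclm_left _ _ _ _ hp hq
    (fun ξ => (hHam ξ).1) (fun ξ => (hHam ξ).2)

/-- along solutions of Hamilton's equations for `ℋ`, the rotation
invariant `I_rot(q,p) = ⟨Jp, q⟩` is conserved. -/
theorem statement15 (α c : ℝ) (hc : c ^ 2 ≠ 1) (V : ℝ → ℝ) (hV : ContDiff ℝ 1 V)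
    (q p : ℝ → E2) (hq : Differentiable ℝ q) (hp : Differentiable ℝ p)
    (hHam : ∀ ξ : ℝ,
      deriv q ξ = (c ^ 2 - 1)⁻¹ • (p ξ + (c * α) • Jmap (q ξ))
        ∧ deriv p ξ = -((c ^ 2 - 1)⁻¹ • ((α ^ 2) • q ξ - (c * α) • Jmap (p ξ)))
            + deriv V (‖q ξ‖ ^ 2) • q ξ) :
    ∀ ξ₁ ξ₂ : ℝ, ⟪Jmap (p ξ₁), q ξ₁⟫ = ⟪Jmap (p ξ₂), q ξ₂⟫ :=
  statement15_general α c V q p hq hp hHam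
end
end
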